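/- Consider a GWO stagnation process with horizon T ≥ 2, guiding positions p₁, p₂, p₃, center c = (p₁ + p₂ + p₃)/3, and step sizes a(t) = 2(1 - t/T); set p₀ = (4/9)(p₁² + p₂² + p₃²) - (1/9)(p₁ + p₂ + p₃)². Assume X(1) has finite second moment and E[X(1)] = c. Then X(T) has finite second moment and Var(X(T)) ≤ (4/(9T²))·(Var(X(1)) + p₀·(T - 1)). -/

import Mathlib

open MeasureTheory ProbabilityTheory Set

/-- The GWO step sizes `a(t) = 2 (1 - t/T)`. -/
noncomputable def gwoStep (T t : ℕ) : ℝ := 2 * (1 - (t : ℝ) / (T : ℝ))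

/-- A GWO stagnation process with horizon `T`, guiding positions
`p 0, p 1, p 2` and step sizes `a(t) = 2 (1 - t/T)`: random positions `X t`
and random coefficients `A t k ~ U[-a(t), a(t)]`, `C t k ~ U[0, 2]` such that
for each `t` the seven random variables `X t, A t k, C t k` are mutually
independent and the GWO update equation holds pointwise. -/
structure GWOStagnationProcess {Ω : Type*} [MeasurableSpace Ω] (P : Measure Ω)
    (T : ℕ) (p : Fin 3 → ℝ) where
  X : ℕ → Ω → ℝ
  A : ℕ → Fin 3 → Ω → ℝ
  C : ℕ → Fin 3 → Ω → ℝ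
  measX : ∀ t, Measurable (X t)
  measA : ∀ t k, Measurable (A t k)
  measC : ∀ t k, Measurable (C t k)
  lawA : ∀ t, 1 ≤ t → t ≤ T - 1 → ∀ k,
    Measure.map (A t k) P
      = (volume (Icc (-(gwoStep T t)) (gwoStep T t)))⁻¹ •
          volume.restrict (Icc (-(gwoStep T t)) (gwoStep T t))
  lawC : ∀ t, 1 ≤ t → t ≤ T - 1 → ∀ k,
    Measure.map (C t k) P
      = (volume (Icc (0:ℝ) 2))⁻¹ • volume.restrict (Icc (0:ℝ) 2)
  indep : ∀ t, 1 ≤ t → t ≤ T - 1 →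
    iIndepFun (m := fun _ : Fin 7 => (inferInstance : MeasurableSpace ℝ))
      ![X t, A t 0, A t 1, A t 2, C t 0, C t 1, C t 2] P
  update : ∀ t, 1 ≤ t → t ≤ T - 1 → ∀ ω,
    X (t + 1) ω
      = (1/3 : ℝ) * ∑ k : Fin 3, (p k + A t k ω * |C t k ω * p k - X t ω|)

lemma unif_integral {a b : ℝ} (hab : a < b) (g : ℝ → ℝ) :
    ∫ x, g x ∂((volume (Icc a b))⁻¹ • volume.restrict (Icc a b))
      = (b - a)⁻¹ * ∫ x in a..b, g x := by
  rw [integral_smul_measure, Real.volume_Icc, ← ENNReal.ofReal_inv_of_pos (by linarith),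
    ENNReal.toReal_ofReal (inv_nonneg.mpr (by linarith)),
    intervalIntegral.integral_of_le hab.le, integral_Icc_eq_integral_Ioc]
  rfl

lemma ae_mem_of_map_unif {Ω : Type*} [MeasurableSpace Ω] {P : Measure Ω} {f : Ω → ℝ}
    (hf : Measurable f) {a b : ℝ}
    (h : Measure.map f P = (volume (Icc a b))⁻¹ • volume.restrict (Icc a b)) :
    ∀ᵐ ω ∂P, f ω ∈ Icc a b := by
  have h0 : P (f ⁻¹' (Icc a b)ᶜ) = 0 := by
    rw [← Measure.map_apply hf measurableSet_Icc.compl, h, Measure.smul_apply,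
      Measure.restrict_apply measurableSet_Icc.compl]
    simp
  have := measure_eq_zero_iff_ae_notMem.mp h0
  filter_upwards [this] with ω hω
  simpa using hω

lemma unif_moment {Ω : Type*} [MeasurableSpace Ω] {P : Measure Ω} {f : Ω → ℝ}
    (hf : Measurable f) {a b : ℝ} (hab : a < b)
    (h : Measure.map f P = (volume (Icc a b))⁻¹ • volume.restrict (Icc a b)) :
    (∫ ω, f ω ∂P = (a + b) / 2) ∧ (∫ ω, (f ω) ^ 2 ∂P = (b^2 + a*b + a^2) / 3) := by
  constructor
  · have : ∫ ω, f ω ∂P = ∫ x, x ∂(Measure.map f P) :=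
      (integral_map hf.aemeasurable aestronglyMeasurable_id).symm
    rw [this, h, unif_integral hab (fun x => x), integral_id]
    have hba : b - a ≠ 0 := by linarith
    field_simp
    ring
  · have : ∫ ω, (f ω) ^ 2 ∂P = ∫ x, x ^ 2 ∂(Measure.map f P) :=
      (integral_map hf.aemeasurable ((measurable_id.pow_const 2).aestronglyMeasurable)).symm
    rw [this, h, unif_integral hab (fun x => x ^ 2), integral_pow]
    have hba : b - a ≠ 0 := by linarith
    field_simp
    ring

lemma indep_single_pair {Ω : Type*} [MeasurableSpace Ω] {P : Measure Ω} {f : Fin 7 → Ω → ℝ}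
    (hf : ∀ i, Measurable (f i))
    (hind : iIndepFun (m := fun _ : Fin 7 => (inferInstance : MeasurableSpace ℝ)) f P)
    (i j k : Fin 7) (hij : i ≠ j) (hik : i ≠ k) :
    IndepFun (f i) (fun ω => (f j ω, f k ω)) P :=
  (hind.indepFun_prodMk hf j k i hij.symm hik.symm).symm

lemma indep_single_quad {Ω : Type*} [MeasurableSpace Ω] {P : Measure Ω} {f : Fin 7 → Ω → ℝ}
    (hf : ∀ i, Measurable (f i))
    (hind : iIndepFun (m := fun _ : Fin 7 => (inferInstance : MeasurableSpace ℝ)) f P)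
    (i j k l m : Fin 7) (hij : i ≠ j) (hik : i ≠ k) (hil : i ≠ l) (him : i ≠ m) :
    IndepFun (f i) (fun ω => (f j ω, f k ω, f l ω, f m ω)) P := by
  classical
  have h := hind.indepFun_finset {i} {j, k, l, m}
    (by simp [Finset.disjoint_left, hij, hik, hil, him]) hf
  have h2 := h.comp (φ := fun v : ({i} : Finset (Fin 7)) → ℝ => v ⟨i, by simp⟩)
    (ψ := fun v : ({j, k, l, m} : Finset (Fin 7)) → ℝ =>
      (v ⟨j, by simp⟩, v ⟨k, by simp⟩, v ⟨l, by simp⟩, v ⟨m, by simp⟩))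
    (measurable_pi_apply (X := fun _ => ℝ) _) (by fun_prop)
  exact h2

lemma gwo_step
    {Ω : Type*} [MeasurableSpace Ω] (P : Measure Ω) [IsProbabilityMeasure P]
    (T : ℕ) (p : Fin 3 → ℝ) (proc : GWOStagnationProcess P T p)
    (c : ℝ) (hc : c = (p 0 + p 1 + p 2) / 3)
    (t : ℕ) (ht1 : 1 ≤ t) (ht2 : t ≤ T - 1)
    (hX : MemLp (proc.X t) 2 P) (hmean : ∫ ω, proc.X t ω ∂P = c) :
    MemLp (proc.X (t + 1)) 2 P ∧ (∫ ω, proc.X (t + 1) ω ∂P = c) ∧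
    variance (proc.X (t + 1)) P
      = (gwoStep T t) ^ 2 / 9 *
        (variance (proc.X t) P + ((4/9) * ((p 0)^2 + (p 1)^2 + (p 2)^2)
          - (1/9) * (p 0 + p 1 + p 2)^2)) := by
  have hT2 : 2 ≤ T := by omega
  have htT : t < T := by omega
  have hTpos : (0:ℝ) < T := by exact_mod_cast (by omega : 0 < T)
  set a := gwoStep T t with ha_def
  have ha_pos : 0 < a := by
    rw [ha_def]
    unfold gwoStep
    have h1 : (t:ℝ) < T := by exact_mod_cast htT
    have : (t:ℝ)/T < 1 := (div_lt_one hTpos).mpr h1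
    linarith
  set X := proc.X t with hX_def
  set A := proc.A t with hA_def
  set C := proc.C t with hC_def
  have mX : Measurable X := proc.measX t
  have mA : ∀ k, Measurable (A k) := proc.measA t
  have mC : ∀ k, Measurable (C k) := proc.measC t
  -- moments of the coefficients
  have hA0 : ∀ k, ∫ ω, A k ω ∂P = 0 := fun k => by
    have := (unif_moment (mA k) (by linarith : -a < a) (proc.lawA t ht1 ht2 k)).1
    rw [this]; ring
  have hA2 : ∀ k, ∫ ω, (A k ω)^2 ∂P = a^2/3 := fun k => by
    have := (unif_moment (mA k) (by linarith : -a < a) (proc.lawA t ht1 ht2 k)).2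
    rw [this]; ring
  have hC1 : ∀ k, ∫ ω, C k ω ∂P = 1 := fun k => by
    have := (unif_moment (mC k) (by norm_num : (0:ℝ) < 2) (proc.lawC t ht1 ht2 k)).1
    rw [this]; norm_num
  have hC2 : ∀ k, ∫ ω, (C k ω)^2 ∂P = 4/3 := fun k => by
    have := (unif_moment (mC k) (by norm_num : (0:ℝ) < 2) (proc.lawC t ht1 ht2 k)).2
    rw [this]; norm_num
  have hAbd : ∀ k, ∀ᵐ ω ∂P, |A k ω| ≤ a := fun k => by
    filter_upwards [ae_mem_of_map_unif (mA k) (proc.lawA t ht1 ht2 k)] with ω hω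
    exact abs_le.mpr ⟨hω.1, hω.2⟩
  have hCbd : ∀ k, ∀ᵐ ω ∂P, C k ω ∈ Icc (0:ℝ) 2 := fun k =>
    ae_mem_of_map_unif (mC k) (proc.lawC t ht1 ht2 k)
  -- the centered increments
  set D := fun (k : Fin 3) (ω : Ω) => |C k ω * p k - X ω| with hD_def
  set Y := fun (k : Fin 3) (ω : Ω) => A k ω * D k ω with hY_def
  have mD : ∀ k, Measurable (D k) := fun k => (((mC k).mul_const _).sub mX).abs
  have mY : ∀ k, Measurable (Y k) := fun k => (mA k).mul (mD k)
  have hDmem : ∀ k, MemLp (D k) 2 P := fun k => by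
    have hb : MemLp (fun ω => 2*|p k| + |X ω|) 2 P := (memLp_const (2*|p k|)).add hX.abs
    refine hb.of_le ((mD k).aestronglyMeasurable) ?_
    filter_upwards [hCbd k] with ω hω
    have h2 : |C k ω| ≤ 2 := abs_le.mpr ⟨by linarith [hω.1], hω.2⟩
    have h3 : |C k ω * p k - X ω| ≤ 2*|p k| + |X ω| := by
      calc |C k ω * p k - X ω| ≤ |C k ω * p k| + |X ω| := abs_sub _ _
        _ ≤ 2*|p k| + |X ω| := by
            rw [abs_mul]
            nlinarith [abs_nonneg (p k), abs_nonneg (C k ω), abs_nonneg (X ω)]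
    have h4 : (0:ℝ) ≤ 2*|p k| + |X ω| := by positivity
    simpa [hD_def, Real.norm_eq_abs, abs_abs, abs_of_nonneg h4] using h3
  have hYmem : ∀ k, MemLp (Y k) 2 P := fun k => by
    have hb : MemLp (fun ω => a * D k ω) 2 P := (hDmem k).const_mul a
    refine hb.of_le ((mY k).aestronglyMeasurable) ?_
    filter_upwards [hAbd k] with ω hω
    rw [Real.norm_eq_abs, Real.norm_eq_abs, hY_def, abs_mul, abs_mul]
    exact mul_le_mul_of_nonneg_right (hω.trans (le_abs_self a)) (abs_nonneg _)
  have hYint : ∀ k, Integrable (Y k) P := fun k => (hYmem k).integrable one_le_two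
  have hYsq : ∀ k, Integrable (fun ω => (Y k ω)^2) P := fun k => (hYmem k).integrable_sq
  have hYmul : ∀ j k, Integrable (fun ω => Y j ω * Y k ω) P := fun j k => by
    have h : MemLp ((Y j) • (Y k)) 1 P := (hYmem k).smul (hYmem j)
    have h2 := memLp_one_iff_integrable.mp h
    exact h2.congr (Filter.Eventually.of_forall fun ω => rfl)
  -- independence facts
  have hind := proc.indep t ht1 ht2
  have hf7m : ∀ i : Fin 7, Measurable (![X, A 0, A 1, A 2, C 0, C 1, C 2] i) := by
    intro i
    fin_cases i
    · exact mX
    · exact mA 0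
    · exact mA 1
    · exact mA 2
    · exact mC 0
    · exact mC 1
    · exact mC 2
  have hA_CX : ∀ k : Fin 3, IndepFun (A k) (fun ω => (C k ω, X ω)) P := by
    intro k
    fin_cases k
    · exact indep_single_pair hf7m hind 1 4 0 (by decide) (by decide)
    · exact indep_single_pair hf7m hind 2 5 0 (by decide) (by decide)
    · exact indep_single_pair hf7m hind 3 6 0 (by decide) (by decide)
  have hC_X : ∀ k : Fin 3, IndepFun (C k) X P := by
    intro k
    fin_cases k
    · exact hind.indepFun (by decide : (4 : Fin 7) ≠ 0)
    · exact hind.indepFun (by decide : (5 : Fin 7) ≠ 0)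
    · exact hind.indepFun (by decide : (6 : Fin 7) ≠ 0)
  have hA_rest : ∀ j k : Fin 3, j ≠ k →
      IndepFun (A j) (fun ω => (A k ω, C j ω, C k ω, X ω)) P := by
    intro j k hjk
    fin_cases j <;> fin_cases k
    · exact absurd rfl hjk
    · exact indep_single_quad hf7m hind 1 2 4 5 0 (by decide) (by decide) (by decide) (by decide)
    · exact indep_single_quad hf7m hind 1 3 4 6 0 (by decide) (by decide) (by decide) (by decide)
    · exact indep_single_quad hf7m hind 2 1 5 4 0 (by decide) (by decide) (by decide) (by decide)
    · exact absurd rfl hjk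
    · exact indep_single_quad hf7m hind 2 3 5 6 0 (by decide) (by decide) (by decide) (by decide)
    · exact indep_single_quad hf7m hind 3 1 6 4 0 (by decide) (by decide) (by decide) (by decide)
    · exact indep_single_quad hf7m hind 3 2 6 5 0 (by decide) (by decide) (by decide) (by decide)
    · exact absurd rfl hjk
  -- key expectations
  have hEY : ∀ k, ∫ ω, Y k ω ∂P = 0 := fun k => by
    have hI : IndepFun (A k) (D k) P :=
      (hA_CX k).comp measurable_id (by fun_prop : Measurable fun q : ℝ × ℝ => |q.1 * p k - q.2|)
    calc ∫ ω, Y k ω ∂P = ∫ ω, (A k * D k) ω ∂P := rfl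
      _ = (∫ ω, A k ω ∂P) * ∫ ω, D k ω ∂P :=
          hI.integral_mul_eq_mul_integral (mA k).aestronglyMeasurable (mD k).aestronglyMeasurable
      _ = 0 := by rw [hA0 k]; ring
  have hEY2 : ∀ k, ∫ ω, (Y k ω)^2 ∂P = a^2/3 * ∫ ω, (D k ω)^2 ∂P := fun k => by
    have hI : IndepFun (fun ω => (A k ω)^2) (fun ω => (D k ω)^2) P :=
      (hA_CX k).comp (measurable_id.pow_const 2)
        (by fun_prop : Measurable fun q : ℝ × ℝ => |q.1 * p k - q.2| ^ 2)
    calc ∫ ω, (Y k ω)^2 ∂P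
        = ∫ ω, ((fun ω => (A k ω)^2) * (fun ω => (D k ω)^2)) ω ∂P := by
          congr 1; funext ω; simp only [Pi.mul_apply, hY_def]; ring
      _ = (∫ ω, (A k ω)^2 ∂P) * ∫ ω, (D k ω)^2 ∂P :=
          hI.integral_mul_eq_mul_integral ((mA k).pow_const 2).aestronglyMeasurable ((mD k).pow_const 2).aestronglyMeasurable
      _ = _ := by rw [hA2 k]
  have hX2 : ∫ ω, (X ω)^2 ∂P = variance X P + c^2 := by
    have h := variance_eq_sub hX
    simp only [Pi.pow_apply] at h
    rw [hmean] at h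
    linarith
  have hED2 : ∀ k, ∫ ω, (D k ω)^2 ∂P
      = 4/3 * (p k)^2 - 2 * p k * c + (variance X P + c^2) := fun k => by
    have hint1 : Integrable (fun ω => (C k ω)^2 * (p k)^2) P := by
      apply Integrable.mono' (integrable_const (4 * (p k)^2)) (((mC k).pow_const 2).mul_const _).aestronglyMeasurable
      filter_upwards [hCbd k] with ω hω
      rw [Real.norm_eq_abs, abs_mul, abs_pow, sq_abs, abs_of_nonneg (sq_nonneg (p k))]
      have h4 : C k ω^2 ≤ 4 := by nlinarith [hω.1, hω.2]
      nlinarith [sq_nonneg (p k), mul_le_mul_of_nonneg_right h4 (sq_nonneg (p k))]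
    have hint2 : Integrable (fun ω => 2 * p k * (C k ω * X ω)) P := by
      apply Integrable.const_mul
      apply Integrable.mono' (((hX.integrable one_le_two).abs).const_mul 2) ((mC k).mul mX).aestronglyMeasurable
      filter_upwards [hCbd k] with ω hω
      rw [Real.norm_eq_abs, Pi.mul_apply, abs_mul]
      have : |C k ω| ≤ 2 := abs_le.mpr ⟨by linarith [hω.1], hω.2⟩
      exact mul_le_mul_of_nonneg_right this (abs_nonneg _)
    have hint3 : Integrable (fun ω => (X ω)^2) P := hX.integrable_sq
    have hECX : ∫ ω, C k ω * X ω ∂P = c := by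
      calc ∫ ω, C k ω * X ω ∂P = ∫ ω, ((C k) * X) ω ∂P := rfl
        _ = (∫ ω, C k ω ∂P) * ∫ ω, X ω ∂P :=
            (hC_X k).integral_mul_eq_mul_integral (mC k).aestronglyMeasurable mX.aestronglyMeasurable
        _ = c := by rw [hC1 k, hmean]; ring
    have hrw : ∀ ω, (D k ω)^2
        = (C k ω)^2 * (p k)^2 - 2 * p k * (C k ω * X ω) + (X ω)^2 := fun ω => by
      simp only [hD_def, sq_abs]; ring
    have hint12 : Integrable (fun ω => (C k ω)^2 * (p k)^2 - 2 * p k * (C k ω * X ω)) P :=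
      hint1.sub hint2
    rw [integral_congr_ae (Filter.Eventually.of_forall hrw),
      integral_add hint12 hint3, integral_sub hint1 hint2]
    have e1 : ∫ ω, (C k ω)^2 * (p k)^2 ∂P = 4/3 * (p k)^2 := by
      rw [integral_mul_const, hC2 k]
    have e2 : ∫ ω, 2 * p k * (C k ω * X ω) ∂P = 2 * p k * c := by
      rw [integral_const_mul, hECX]
    rw [e1, e2, hX2]
  have hcross : ∀ j k : Fin 3, j ≠ k → ∫ ω, Y j ω * Y k ω ∂P = 0 := fun j k hjk => by
    have hI : IndepFun (A j) (fun ω => D j ω * (A k ω * D k ω)) P :=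
      (hA_rest j k hjk).comp measurable_id
        (by fun_prop :
          Measurable fun q : ℝ × ℝ × ℝ × ℝ => |q.2.1 * p j - q.2.2.2| * (q.1 * |q.2.2.1 * p k - q.2.2.2|))
    calc ∫ ω, Y j ω * Y k ω ∂P
        = ∫ ω, ((A j) * fun ω => D j ω * (A k ω * D k ω)) ω ∂P := by
          congr 1; funext ω; simp only [Pi.mul_apply, hY_def]; ring
      _ = (∫ ω, A j ω ∂P) * ∫ ω, D j ω * (A k ω * D k ω) ∂P :=
          hI.integral_mul_eq_mul_integral (mA j).aestronglyMeasurable ((mD j).mul ((mA k).mul (mD k))).aestronglyMeasurable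
      _ = 0 := by rw [hA0 j]; ring
  -- representation of the next position
  have hrepr : ∀ ω, proc.X (t+1) ω = c + (1/3) * (Y 0 ω + Y 1 ω + Y 2 ω) := fun ω => by
    rw [proc.update t ht1 ht2 ω, Fin.sum_univ_three]
    simp only [hY_def, hD_def, hc, ← hX_def, ← hA_def, ← hC_def]
    ring
  -- MemLp
  have hsum_mem : MemLp (fun ω => Y 0 ω + Y 1 ω + Y 2 ω) 2 P :=
    ((hYmem 0).add (hYmem 1)).add (hYmem 2)
  have hXmem' : MemLp (proc.X (t+1)) 2 P := by
    have h1 : MemLp (fun ω => c + (1/3) * (Y 0 ω + Y 1 ω + Y 2 ω)) 2 P :=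
      (memLp_const c).add (hsum_mem.const_mul (1/3))
    exact h1.ae_eq (Filter.Eventually.of_forall fun ω => (hrepr ω).symm)
  -- mean
  have hsum_int : Integrable (fun ω => Y 0 ω + Y 1 ω + Y 2 ω) P :=
    ((hYint 0).add (hYint 1)).add (hYint 2)
  have hEsum : ∫ ω, (Y 0 ω + Y 1 ω + Y 2 ω) ∂P = 0 := by
    have i01 : Integrable (fun ω => Y 0 ω + Y 1 ω) P := (hYint 0).add (hYint 1)
    rw [integral_add i01 (hYint 2), integral_add (hYint 0) (hYint 1),
      hEY 0, hEY 1, hEY 2]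
    ring
  have hmean' : ∫ ω, proc.X (t+1) ω ∂P = c := by
    rw [integral_congr_ae (Filter.Eventually.of_forall hrepr),
      integral_add (integrable_const c) (hsum_int.const_mul (1/3)), integral_const,
      integral_const_mul, hEsum]
    simp
  -- variance
  have hEsum2 : ∫ ω, (Y 0 ω + Y 1 ω + Y 2 ω)^2 ∂P
      = (∫ ω, (Y 0 ω)^2 ∂P) + (∫ ω, (Y 1 ω)^2 ∂P) + ∫ ω, (Y 2 ω)^2 ∂P := by
    have e : ∀ ω, (Y 0 ω + Y 1 ω + Y 2 ω)^2
        = (Y 0 ω)^2 + (Y 1 ω)^2 + (Y 2 ω)^2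
          + (2*(Y 0 ω * Y 1 ω) + 2*(Y 0 ω * Y 2 ω) + 2*(Y 1 ω * Y 2 ω)) := fun ω => by ring
    have i1 : Integrable (fun ω => (Y 0 ω)^2 + (Y 1 ω)^2 + (Y 2 ω)^2) P :=
      ((hYsq 0).add (hYsq 1)).add (hYsq 2)
    have i2 : Integrable (fun ω => 2*(Y 0 ω * Y 1 ω) + 2*(Y 0 ω * Y 2 ω) + 2*(Y 1 ω * Y 2 ω)) P :=
      (((hYmul 0 1).const_mul 2).add ((hYmul 0 2).const_mul 2)).add ((hYmul 1 2).const_mul 2)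
    have is01 : Integrable (fun ω => (Y 0 ω)^2 + (Y 1 ω)^2) P := (hYsq 0).add (hYsq 1)
    have im01 : Integrable (fun ω => 2*(Y 0 ω * Y 1 ω)) P := (hYmul 0 1).const_mul 2
    have im02 : Integrable (fun ω => 2*(Y 0 ω * Y 2 ω)) P := (hYmul 0 2).const_mul 2
    have im12 : Integrable (fun ω => 2*(Y 1 ω * Y 2 ω)) P := (hYmul 1 2).const_mul 2
    have imm : Integrable (fun ω => 2*(Y 0 ω * Y 1 ω) + 2*(Y 0 ω * Y 2 ω)) P := im01.add im02
    rw [integral_congr_ae (Filter.Eventually.of_forall e), integral_add i1 i2,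
      integral_add is01 (hYsq 2), integral_add (hYsq 0) (hYsq 1),
      integral_add imm im12, integral_add im01 im02,
      integral_const_mul, integral_const_mul, integral_const_mul,
      hcross 0 1 (by decide), hcross 0 2 (by decide), hcross 1 2 (by decide)]
    ring
  have hmom2 : ∫ ω, (proc.X (t+1) ω)^2 ∂P
      = c^2 + (1/9) * ∫ ω, (Y 0 ω + Y 1 ω + Y 2 ω)^2 ∂P := by
    have e2 : ∀ ω, (proc.X (t+1) ω)^2
        = c^2 + ((2*c/3)*(Y 0 ω + Y 1 ω + Y 2 ω) + (1/9)*(Y 0 ω + Y 1 ω + Y 2 ω)^2) := fun ω => by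
      rw [hrepr ω]; ring
    have isum2 : Integrable (fun ω => (Y 0 ω + Y 1 ω + Y 2 ω)^2) P := hsum_mem.integrable_sq
    have j1 : Integrable (fun ω => (2*c/3)*(Y 0 ω + Y 1 ω + Y 2 ω)) P := hsum_int.const_mul _
    have j2 : Integrable (fun ω => (1/9)*(Y 0 ω + Y 1 ω + Y 2 ω)^2) P := isum2.const_mul _
    have j12 : Integrable (fun ω => (2*c/3)*(Y 0 ω + Y 1 ω + Y 2 ω)
        + (1/9)*(Y 0 ω + Y 1 ω + Y 2 ω)^2) P := j1.add j2
    rw [integral_congr_ae (Filter.Eventually.of_forall e2),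
      integral_add (integrable_const _) j12,
      integral_add j1 j2, integral_const,
      integral_const_mul, integral_const_mul, hEsum]
    simp
  have hvar : variance (proc.X (t+1)) P
      = a ^ 2 / 9 * (variance X P + (4/9 * ((p 0)^2 + (p 1)^2 + (p 2)^2)
          - 1/9 * (p 0 + p 1 + p 2)^2)) := by
    have h := variance_eq_sub hXmem'
    simp only [Pi.pow_apply] at h
    rw [hmean'] at h
    rw [h, hmom2, hEsum2, hEY2 0, hEY2 1, hEY2 2, hED2 0, hED2 1, hED2 2, hc]
    ring
  exact ⟨hXmem', hmean', hvar⟩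

/-- The quantitative bound at the core of Proposition 3.5 of the paper
(order-2 stability of the GWO under the stagnation assumption): if the
initial position has finite second moment and mean `c`, then the final
position `X T` has finite second moment and
`Var(X T) ≤ (4 / (9 T²)) (Var(X 1) + p₀ (T - 1))`, where
`p₀ = (4/9)(p₁² + p₂² + p₃²) - (1/9)(p₁ + p₂ + p₃)²`. -/
theorem gwo_order_two_stability_bound
    {Ω : Type*} [MeasurableSpace Ω] (P : Measure Ω) [IsProbabilityMeasure P]
    (T : ℕ) (hT : 2 ≤ T) (p : Fin 3 → ℝ)
    (proc : GWOStagnationProcess P T p)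
    (c : ℝ) (hc : c = (p 0 + p 1 + p 2) / 3)
    (p₀ : ℝ)
    (hp₀ : p₀ = (4/9) * ((p 0)^2 + (p 1)^2 + (p 2)^2)
      - (1/9) * (p 0 + p 1 + p 2)^2)
    (hinit : MemLp (proc.X 1) 2 P)
    (hmean : ∫ ω, proc.X 1 ω ∂P = c) :
    MemLp (proc.X T) 2 P ∧
    variance (proc.X T) P
      ≤ (4 / (9 * (T : ℝ)^2)) * (variance (proc.X 1) P + p₀ * ((T : ℝ) - 1)) := by
  have hp0nn : 0 ≤ p₀ := by
    rw [hp₀]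
    nlinarith [sq_nonneg (p 0 - p 1), sq_nonneg (p 0 - p 2), sq_nonneg (p 1 - p 2)]
  have claim : ∀ t, 1 ≤ t → t ≤ T - 1 →
      MemLp (proc.X t) 2 P ∧ (∫ ω, proc.X t ω ∂P = c) ∧
      variance (proc.X t) P ≤ variance (proc.X 1) P + p₀ * ((t:ℝ) - 1) := by
    intro t ht1
    induction t, ht1 using Nat.le_induction with
    | base => exact fun _ => ⟨hinit, hmean, by norm_num⟩
    | succ n hn ih =>
      intro hsucc
      have hn2 : n ≤ T - 1 := by omega
      obtain ⟨hm, hme, hv⟩ := ih hn2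
      obtain ⟨hm', hme', hv'⟩ := gwo_step P T p proc c hc n hn hn2 hm hme
      refine ⟨hm', hme', ?_⟩
      have hTpos : (0:ℝ) < T := by exact_mod_cast (by omega : 0 < T)
      have hg0 : 0 ≤ gwoStep T n := by
        unfold gwoStep
        have h1 : (n:ℝ) ≤ T := by exact_mod_cast (by omega : n ≤ T)
        have : (n:ℝ)/T ≤ 1 := (div_le_one hTpos).mpr h1
        linarith
      have hg2 : gwoStep T n ≤ 2 := by
        unfold gwoStep
        have : 0 ≤ (n:ℝ)/T := by positivity
        linarith
      have hstep : gwoStep T n ^ 2 / 9 ≤ 1 := by nlinarith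
      rw [hv', ← hp₀]
      have hnonneg : 0 ≤ variance (proc.X n) P + p₀ :=
        add_nonneg (variance_nonneg _ _) hp0nn
      calc gwoStep T n ^ 2 / 9 * (variance (proc.X n) P + p₀)
          ≤ 1 * (variance (proc.X n) P + p₀) := mul_le_mul_of_nonneg_right hstep hnonneg
        _ ≤ variance (proc.X 1) P + p₀ * ((n:ℝ) - 1) + p₀ := by linarith
        _ = variance (proc.X 1) P + p₀ * (((n+1:ℕ):ℝ) - 1) := by push_cast; ring
  obtain ⟨hm, hme, hv⟩ := claim (T-1) (by omega) le_rfl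
  obtain ⟨hm', hme', hv'⟩ := gwo_step P T p proc c hc (T-1) (by omega) le_rfl hm hme
  have hTT : T - 1 + 1 = T := by omega
  rw [hTT] at hm' hme' hv'
  refine ⟨hm', ?_⟩
  have hTpos : (0:ℝ) < T := by exact_mod_cast (by omega : 0 < T)
  have hcast : ((T-1:ℕ):ℝ) = (T:ℝ) - 1 := by
    rw [Nat.cast_sub (by omega : 1 ≤ T)]
    norm_num
  have hgs : gwoStep T (T-1) = 2 / T := by
    unfold gwoStep
    rw [hcast]
    field_simp
    ring
  rw [hv', ← hp₀, hgs]
  have h49 : (0:ℝ) ≤ 4/(9*(T:ℝ)^2) := by positivity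
  have hv2 : variance (proc.X (T-1)) P ≤ variance (proc.X 1) P + p₀ * ((T:ℝ) - 1 - 1) := by
    rw [hcast] at hv
    linarith
  calc (2/(T:ℝ))^2/9 * (variance (proc.X (T-1)) P + p₀)
      = 4/(9*(T:ℝ)^2) * (variance (proc.X (T-1)) P + p₀) := by
        field_simp
        ring
    _ ≤ 4/(9*(T:ℝ)^2) * (variance (proc.X 1) P + p₀ * ((T:ℝ)-1)) := by
        apply mul_le_mul_of_nonneg_left _ h49
        linarith
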